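/- Fix n ∈ ℕ and let ((φ_i, F_i) : (𝒱_i, 𝔟_i) → (𝒰, 𝔞))_{i∈I} be an n-cover of map-graded categories consisting of subcartesian graded functors. For each i, j let (𝒱_i ×_𝒰 𝒱_j, 𝔟_i ×_𝔞 𝔟_j) be the pullback in Map, with projections G_1, G_2 (which are again subcartesian). Then C^n satisfies the sheaf condition: for every family of n-cochains ψ_i ∈ C^n_{𝒱_i}(𝔟_i) such that G_1^*(ψ_i) = G_2^*(ψ_j) in C^n_{𝒱_i ×_𝒰 𝒱_j}(𝔟_i ×_𝔞 𝔟_j) for all i, j, there exists a unique ψ ∈ C^n_𝒰(𝔞) with F_i^*(ψ) = ψ_i for all i. Hence the presheaf C^n : Map_sc → Mod(k), (𝒰, 𝔞) ↦ C^n_𝒰(𝔞), is a sheaf for the pretopology of n-covers. -/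

import Mathlib

open CategoryTheory

universe u

namespace MapGr

variable (k : Type u) [CommRing k]

/-- A (`k`-linear) map-graded category `(𝒰, 𝔞)`: a set `𝔞_U` of objects over every
`U ∈ 𝒰`, a `k`-module `𝔞_u(B, A)` of morphisms over every `u : U ⟶ U'` in `𝒰`, together
with associative, unital, `k`-bilinear composition maps. -/
structure GradedCat (𝒰 : Type u) [Category.{u} 𝒰] : Type (u + 1) where
  Obj : 𝒰 → Type u
  Hom : ∀ {X Y : 𝒰}, (X ⟶ Y) → Obj X → Obj Y → ModuleCat.{u} k
  comp : ∀ {X Y Z : 𝒰} {f : Y ⟶ Z} {g : X ⟶ Y} {C : Obj X} {B : Obj Y} {A : Obj Z},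
    Hom f B A → Hom g C B → Hom (g ≫ f) C A
  id : ∀ {X : 𝒰} (A : Obj X), Hom (𝟙 X) A A
  comp_add_left : ∀ {X Y Z : 𝒰} {f : Y ⟶ Z} {g : X ⟶ Y} {C : Obj X} {B : Obj Y}
    {A : Obj Z} (x x' : Hom f B A) (y : Hom g C B),
    comp (x + x') y = comp x y + comp x' y
  comp_add_right : ∀ {X Y Z : 𝒰} {f : Y ⟶ Z} {g : X ⟶ Y} {C : Obj X} {B : Obj Y}
    {A : Obj Z} (x : Hom f B A) (y y' : Hom g C B),
    comp x (y + y') = comp x y + comp x y'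
  comp_smul_left : ∀ {X Y Z : 𝒰} {f : Y ⟶ Z} {g : X ⟶ Y} {C : Obj X} {B : Obj Y}
    {A : Obj Z} (r : k) (x : Hom f B A) (y : Hom g C B),
    comp (r • x) y = r • comp x y
  comp_smul_right : ∀ {X Y Z : 𝒰} {f : Y ⟶ Z} {g : X ⟶ Y} {C : Obj X} {B : Obj Y}
    {A : Obj Z} (r : k) (x : Hom f B A) (y : Hom g C B),
    comp x (r • y) = r • comp x y
  comp_id : ∀ {X Y : 𝒰} {f : X ⟶ Y} {B : Obj X} {A : Obj Y} (x : Hom f B A),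
    HEq (comp x (id B)) x
  id_comp : ∀ {X Y : 𝒰} {f : X ⟶ Y} {B : Obj X} {A : Obj Y} (x : Hom f B A),
    HEq (comp (id A) x) x
  assoc : ∀ {W X Y Z : 𝒰} {f : Y ⟶ Z} {g : X ⟶ Y} {h : W ⟶ X} {D : Obj W} {C : Obj X}
    {B : Obj Y} {A : Obj Z} (x : Hom f B A) (y : Hom g C B) (z : Hom h D C),
    HEq (comp (comp x y) z) (comp x (comp y z))

variable {k}
variable {𝒰 : Type u} [Category.{u} 𝒰]

namespace GradedCat

variable (𝔞 : GradedCat k 𝒰)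

/-- Transport of graded morphisms along an equality of underlying morphisms of `𝒰`. -/
def Hcast {X Y : 𝒰} {f g : X ⟶ Y} (h : f = g) {B : 𝔞.Obj X} {A : 𝔞.Obj Y}
    (x : 𝔞.Hom f B A) : 𝔞.Hom g B A :=
  _root_.cast (by rw [h]) x

theorem Hcast_heq {X Y : 𝒰} {f g : X ⟶ Y} (h : f = g) {B : 𝔞.Obj X} {A : 𝔞.Obj Y}
    (x : 𝔞.Hom f B A) : HEq (𝔞.Hcast h x) x :=
  cast_heq _ _

theorem Hcast_add {X Y : 𝒰} {f g : X ⟶ Y} (h : f = g) {B : 𝔞.Obj X} {A : 𝔞.Obj Y}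
    (x y : 𝔞.Hom f B A) : 𝔞.Hcast h (x + y) = 𝔞.Hcast h x + 𝔞.Hcast h y := by
  subst h; rfl

theorem Hcast_smul {X Y : 𝒰} {f g : X ⟶ Y} (h : f = g) {B : 𝔞.Obj X} {A : 𝔞.Obj Y}
    (r : k) (x : 𝔞.Hom f B A) : 𝔞.Hcast h (r • x) = r • 𝔞.Hcast h x := by
  subst h; rfl

theorem comp_congr {X Y Z : 𝒰} {f f' : Y ⟶ Z} (hf : f = f') {g g' : X ⟶ Y} (hg : g = g')
    {C : 𝔞.Obj X} {B : 𝔞.Obj Y} {A : 𝔞.Obj Z} {x : 𝔞.Hom f B A} {x' : 𝔞.Hom f' B A}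
    (hx : HEq x x') {y : 𝔞.Hom g C B} {y' : 𝔞.Hom g' C B} (hy : HEq y y') :
    HEq (𝔞.comp x y) (𝔞.comp x' y') := by
  subst hf; subst hg; rw [eq_of_heq hx, eq_of_heq hy]

end GradedCat

variable {𝒱 : Type u} [Category.{u} 𝒱]

/-- The `𝒱`-graded category `𝔞^φ` obtained by restricting a `𝒰`-graded category `𝔞`
along a functor `φ : 𝒱 ⥤ 𝒰`:  `(𝔞^φ)_V = 𝔞_{φ V}` and `(𝔞^φ)_v(A, A') = 𝔞_{φ v}(A, A')`. -/
def GradedCat.restrict (φ : 𝒱 ⥤ 𝒰) (𝔞 : GradedCat k 𝒰) : GradedCat k 𝒱 where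
  Obj V := 𝔞.Obj (φ.obj V)
  Hom f B A := 𝔞.Hom (φ.map f) B A
  comp x y := 𝔞.Hcast (φ.map_comp _ _).symm (𝔞.comp x y)
  id A := 𝔞.Hcast (φ.map_id _).symm (𝔞.id A)
  comp_add_left x x' y := by (try dsimp only); rw [𝔞.comp_add_left, 𝔞.Hcast_add]
  comp_add_right x y y' := by (try dsimp only); rw [𝔞.comp_add_right, 𝔞.Hcast_add]
  comp_smul_left r x y := by (try dsimp only); rw [𝔞.comp_smul_left, 𝔞.Hcast_smul]
  comp_smul_right r x y := by (try dsimp only); rw [𝔞.comp_smul_right, 𝔞.Hcast_smul]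
  comp_id x :=
    ((𝔞.Hcast_heq _ _).trans
      ((𝔞.comp_congr rfl (φ.map_id _) HEq.rfl (𝔞.Hcast_heq _ _)).trans (𝔞.comp_id _)))
  id_comp x :=
    ((𝔞.Hcast_heq _ _).trans
      ((𝔞.comp_congr (φ.map_id _) rfl (𝔞.Hcast_heq _ _) HEq.rfl).trans (𝔞.id_comp _)))
  assoc x y z := by
    refine ((𝔞.Hcast_heq _ _).trans ?_).trans (𝔞.Hcast_heq _ _).symm
    refine ((𝔞.comp_congr (φ.map_comp _ _) rfl (𝔞.Hcast_heq _ _) HEq.rfl).trans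
      (𝔞.assoc _ _ _)).trans ?_
    exact 𝔞.comp_congr rfl (φ.map_comp _ _).symm HEq.rfl (𝔞.Hcast_heq _ _).symm

variable (k)

/-- A graded functor `(φ, F) : (𝒱, 𝔟) → (𝒰, 𝔞)` over a functor `φ : 𝒱 ⥤ 𝒰`: maps
`F_V : 𝔟_V → 𝔞_{φ V}` on objects and `k`-linear maps `𝔟_v(B, B') → 𝔞_{φ v}(F B, F B')`
on graded morphisms, preserving composition and identities. -/
structure GradedFunctor (φ : 𝒱 ⥤ 𝒰) (𝔟 : GradedCat k 𝒱) (𝔞 : GradedCat k 𝒰) :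
    Type u where
  obj : ∀ {V : 𝒱}, 𝔟.Obj V → 𝔞.Obj (φ.obj V)
  map : ∀ {V V' : 𝒱} (f : V ⟶ V') {B : 𝔟.Obj V} {B' : 𝔟.Obj V'},
    𝔟.Hom f B B' → 𝔞.Hom (φ.map f) (obj B) (obj B')
  map_add : ∀ {V V' : 𝒱} (f : V ⟶ V') {B : 𝔟.Obj V} {B' : 𝔟.Obj V'}
    (x y : 𝔟.Hom f B B'), map f (x + y) = map f x + map f y
  map_smul : ∀ {V V' : 𝒱} (f : V ⟶ V') {B : 𝔟.Obj V} {B' : 𝔟.Obj V'} (r : k)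
    (x : 𝔟.Hom f B B'), map f (r • x) = r • map f x
  map_id : ∀ {V : 𝒱} (B : 𝔟.Obj V), HEq (map (𝟙 V) (𝔟.id B)) (𝔞.id (obj B))
  map_comp : ∀ {V V' V'' : 𝒱} {f : V' ⟶ V''} {g : V ⟶ V'} {C : 𝔟.Obj V} {B : 𝔟.Obj V'}
    {A : 𝔟.Obj V''} (x : 𝔟.Hom f B A) (y : 𝔟.Hom g C B),
    HEq (map (g ≫ f) (𝔟.comp x y)) (𝔞.comp (map f x) (map g y))

variable {k}

namespace GradedFunctor

variable {φ : 𝒱 ⥤ 𝒰} {𝔟 : GradedCat k 𝒱} {𝔞 : GradedCat k 𝒰}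

theorem map_congr (F : GradedFunctor k φ 𝔟 𝔞) {V V' : 𝒱} {f g : V ⟶ V'} (hfg : f = g)
    {B : 𝔟.Obj V} {B' : 𝔟.Obj V'} {x : 𝔟.Hom f B B'} {y : 𝔟.Hom g B B'} (h : HEq x y) :
    HEq (F.map f x) (F.map g y) := by
  subst hfg; rw [eq_of_heq h]

/-- A graded functor is subcartesian (cartesian with respect to `Map → Mas`) iff all its
maps between graded `Hom`-modules are bijective. -/
def Subcartesian (F : GradedFunctor k φ 𝔟 𝔞) : Prop :=
  ∀ {V V' : 𝒱} (f : V ⟶ V') (B : 𝔟.Obj V) (B' : 𝔟.Obj V'),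
    Function.Bijective (fun x : 𝔟.Hom f B B' => F.map f x)

variable {𝒲 : Type u} [Category.{u} 𝒲] {ψ : 𝒲 ⥤ 𝒱} {𝔠 : GradedCat k 𝒲}

/-- Composition of graded functors. -/
def comp (F : GradedFunctor k φ 𝔟 𝔞) (G : GradedFunctor k ψ 𝔠 𝔟) :
    GradedFunctor k (ψ ⋙ φ) 𝔠 𝔞 where
  obj C := F.obj (G.obj C)
  map := fun {V V'} f {B B'} x => F.map (ψ.map f) (G.map f x)
  map_add := by intro V V' f B B' x y; (try dsimp only); rw [G.map_add, F.map_add]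
  map_smul := by intro V V' f B B' r x; (try dsimp only); rw [G.map_smul, F.map_smul]
  map_id B := (F.map_congr (ψ.map_id _) (G.map_id _)).trans (F.map_id _)
  map_comp x y := (F.map_congr (ψ.map_comp _ _) (G.map_comp _ _)).trans (F.map_comp _ _)

end GradedFunctor

/-- The canonical cartesian graded functor `δ^{φ,𝔞} : (𝒱, 𝔞^φ) → (𝒰, 𝔞)`. -/
def restrictProj (φ : 𝒱 ⥤ 𝒰) (𝔞 : GradedCat k 𝒰) :
    GradedFunctor k φ (𝔞.restrict φ) 𝔞 where
  obj A := A
  map := fun {V V'} _f {B B'} x => x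
  map_add := by intros; rfl
  map_smul := by intros; rfl
  map_id B := 𝔞.Hcast_heq (φ.map_id _).symm (𝔞.id B)
  map_comp x y := 𝔞.Hcast_heq (φ.map_comp _ _).symm (𝔞.comp x y)

theorem restrictProj_subcartesian (φ : 𝒱 ⥤ 𝒰) (𝔞 : GradedCat k 𝒰) :
    (restrictProj φ 𝔞).Subcartesian := by
  intro V V' f B B'
  constructor
  · intro a b h
    exact h
  · intro y
    exact ⟨y, rfl⟩

end MapGr

namespace MapGr

variable {k : Type u} [CommRing k]
variable {𝒰 : Type u} [Category.{u} 𝒰]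

/-- The category `𝒰^♯` associated to a `𝒰`-graded category `𝔞`: objects are pairs
`(U, A)` with `A ∈ 𝔞_U`, and morphisms `(U, A) → (U', A')` are the morphisms `U ⟶ U'`
of `𝒰`. -/
def Sh (𝔞 : GradedCat k 𝒰) : Type u := Σ X : 𝒰, 𝔞.Obj X

instance (𝔞 : GradedCat k 𝒰) : Category.{u} (Sh 𝔞) where
  Hom A B := A.1 ⟶ B.1
  id A := 𝟙 A.1
  comp f g := f ≫ g
  id_comp := by intros; simp
  comp_id := by intros; simp
  assoc := by intros; simp

/-- The underlying morphism of `𝒰` of a morphism of `𝒰^♯`. -/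
def Sh.base {𝔞 : GradedCat k 𝒰} {A B : Sh 𝔞} (f : A ⟶ B) : A.1 ⟶ B.1 := f

@[simp] theorem Sh.base_id {𝔞 : GradedCat k 𝒰} (A : Sh 𝔞) :
    Sh.base (𝟙 A) = 𝟙 A.1 := rfl

@[simp] theorem Sh.base_comp {𝔞 : GradedCat k 𝒰} {A B C : Sh 𝔞} (f : A ⟶ B) (g : B ⟶ C) :
    Sh.base (f ≫ g) = Sh.base f ≫ Sh.base g := rfl

/-- `n`-simplices of the simplicial nerve of a category with specified endpoints:
strings `X = X₀ → X₁ → ⋯ → Xₙ = Y` of `n` composable morphisms. -/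
inductive Pth (C : Type u) [Category.{u} C] : ℕ → C → C → Type u
  | nil (X : C) : Pth C 0 X X
  | cons {n : ℕ} {X Y Z : C} (f : X ⟶ Y) (p : Pth C n Y Z) : Pth C (n + 1) X Z

/-- The composite `|u| = uₙ₋₁ ⋯ u₁ u₀` of a string of composable morphisms. -/
def Pth.comp {C : Type u} [Category.{u} C] : ∀ {n : ℕ} {X Y : C}, Pth C n X Y → (X ⟶ Y)
  | _, _, _, .nil X => 𝟙 X
  | _, _, _, .cons f p => f ≫ p.comp

@[simp] theorem Pth.comp_nil {C : Type u} [Category.{u} C] (X : C) :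
    (Pth.nil X).comp = 𝟙 X := rfl

@[simp] theorem Pth.comp_cons {C : Type u} [Category.{u} C] {n : ℕ} {X Y Z : C}
    (f : X ⟶ Y) (p : Pth C n Y Z) : (Pth.cons f p).comp = f ≫ p.comp := rfl

/-- The map induced by a functor on simplices of the nerves. -/
def Pth.map {C D : Type u} [Category.{u} C] [Category.{u} D] (F : C ⥤ D) :
    ∀ {n : ℕ} {X Y : C}, Pth C n X Y → Pth D n (F.obj X) (F.obj Y)
  | _, _, _, .nil X => .nil _
  | _, _, _, .cons f p => .cons (F.map f) (p.map F)

theorem Pth.comp_map {C D : Type u} [Category.{u} C] [Category.{u} D] (F : C ⥤ D)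
    {n : ℕ} {X Y : C} (p : Pth C n X Y) : (p.map F).comp = F.map p.comp := by
  induction p with
  | nil => simp [Pth.map]
  | cons f p ih => simp [Pth.map, ih]

/-- The set of `n`-simplices of the nerve `𝒩(𝔞) = 𝒩(𝒰^♯)` of a graded category. -/
def NerveTot (C : Type u) [Category.{u} C] (m : ℕ) : Type u :=
  Σ (X : C) (Y : C), Pth C m X Y

/-- The map induced by a functor on the set of `n`-simplices of the nerves. -/
def NerveTot.map {C D : Type u} [Category.{u} C] [Category.{u} D] (F : C ⥤ D) {m : ℕ}
    (s : NerveTot C m) : NerveTot D m :=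
  ⟨F.obj s.1, F.obj s.2.1, Pth.map F s.2.2⟩

/-- A family of elements of the graded `Hom`-modules of `𝔞` lying over a simplex of the
nerve of `𝔞`. -/
inductive PthElts {k : Type u} [CommRing k] {𝒰 : Type u} [Category.{u} 𝒰]
    (𝔞 : GradedCat k 𝒰) : ∀ {n : ℕ} {X Y : Sh 𝔞}, Pth (Sh 𝔞) n X Y → Type u
  | nil (X : Sh 𝔞) : PthElts 𝔞 (Pth.nil X)
  | cons {n : ℕ} {X Y Z : Sh 𝔞} {f : X ⟶ Y} {p : Pth (Sh 𝔞) n Y Z}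
      (x : 𝔞.Hom (Sh.base f) X.2 Y.2) (e : PthElts 𝔞 p) : PthElts 𝔞 (Pth.cons f p)

variable (k)

/-- An `𝔞`-bimodule `M`: `k`-modules `M_u(B, A)` together with associative, unital,
`k`-bilinear left and right actions of `𝔞`. -/
structure Bimod {𝒰 : Type u} [Category.{u} 𝒰] (𝔞 : GradedCat k 𝒰) : Type (u + 1) where
  M : ∀ {X Y : 𝒰}, (X ⟶ Y) → 𝔞.Obj X → 𝔞.Obj Y → ModuleCat.{u} k
  actL : ∀ {X Y Z : 𝒰} {f : Y ⟶ Z} {g : X ⟶ Y} {B : 𝔞.Obj X} {A : 𝔞.Obj Y}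
    {A' : 𝔞.Obj Z}, 𝔞.Hom f A A' → M g B A → M (g ≫ f) B A'
  actR : ∀ {X Y Z : 𝒰} {f : Y ⟶ Z} {g : X ⟶ Y} {B' : 𝔞.Obj X} {B : 𝔞.Obj Y}
    {A : 𝔞.Obj Z}, M f B A → 𝔞.Hom g B' B → M (g ≫ f) B' A
  actL_add_left : ∀ {X Y Z : 𝒰} {f : Y ⟶ Z} {g : X ⟶ Y} {B : 𝔞.Obj X} {A : 𝔞.Obj Y}
    {A' : 𝔞.Obj Z} (x x' : 𝔞.Hom f A A') (m : M g B A),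
    actL (x + x') m = actL x m + actL x' m
  actL_add_right : ∀ {X Y Z : 𝒰} {f : Y ⟶ Z} {g : X ⟶ Y} {B : 𝔞.Obj X} {A : 𝔞.Obj Y}
    {A' : 𝔞.Obj Z} (x : 𝔞.Hom f A A') (m m' : M g B A),
    actL x (m + m') = actL x m + actL x m'
  actL_smul_left : ∀ {X Y Z : 𝒰} {f : Y ⟶ Z} {g : X ⟶ Y} {B : 𝔞.Obj X} {A : 𝔞.Obj Y}
    {A' : 𝔞.Obj Z} (r : k) (x : 𝔞.Hom f A A') (m : M g B A),
    actL (r • x) m = r • actL x m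
  actL_smul_right : ∀ {X Y Z : 𝒰} {f : Y ⟶ Z} {g : X ⟶ Y} {B : 𝔞.Obj X} {A : 𝔞.Obj Y}
    {A' : 𝔞.Obj Z} (r : k) (x : 𝔞.Hom f A A') (m : M g B A),
    actL x (r • m) = r • actL x m
  actR_add_left : ∀ {X Y Z : 𝒰} {f : Y ⟶ Z} {g : X ⟶ Y} {B' : 𝔞.Obj X} {B : 𝔞.Obj Y}
    {A : 𝔞.Obj Z} (m m' : M f B A) (y : 𝔞.Hom g B' B),
    actR (m + m') y = actR m y + actR m' y
  actR_add_right : ∀ {X Y Z : 𝒰} {f : Y ⟶ Z} {g : X ⟶ Y} {B' : 𝔞.Obj X} {B : 𝔞.Obj Y}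
    {A : 𝔞.Obj Z} (m : M f B A) (y y' : 𝔞.Hom g B' B),
    actR m (y + y') = actR m y + actR m y'
  actR_smul_left : ∀ {X Y Z : 𝒰} {f : Y ⟶ Z} {g : X ⟶ Y} {B' : 𝔞.Obj X} {B : 𝔞.Obj Y}
    {A : 𝔞.Obj Z} (r : k) (m : M f B A) (y : 𝔞.Hom g B' B),
    actR (r • m) y = r • actR m y
  actR_smul_right : ∀ {X Y Z : 𝒰} {f : Y ⟶ Z} {g : X ⟶ Y} {B' : 𝔞.Obj X} {B : 𝔞.Obj Y}
    {A : 𝔞.Obj Z} (r : k) (m : M f B A) (y : 𝔞.Hom g B' B),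
    actR m (r • y) = r • actR m y
  actL_id : ∀ {X Y : 𝒰} {g : X ⟶ Y} {B : 𝔞.Obj X} {A : 𝔞.Obj Y} (m : M g B A),
    HEq (actL (𝔞.id A) m) m
  actR_id : ∀ {X Y : 𝒰} {f : X ⟶ Y} {B : 𝔞.Obj X} {A : 𝔞.Obj Y} (m : M f B A),
    HEq (actR m (𝔞.id B)) m
  actL_actL : ∀ {W X Y Z : 𝒰} {f' : Y ⟶ Z} {f : X ⟶ Y} {g : W ⟶ X} {B : 𝔞.Obj W}
    {A : 𝔞.Obj X} {A' : 𝔞.Obj Y} {A'' : 𝔞.Obj Z} (x : 𝔞.Hom f' A' A'')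
    (y : 𝔞.Hom f A A') (m : M g B A),
    HEq (actL x (actL y m)) (actL (𝔞.comp x y) m)
  actR_actR : ∀ {W X Y Z : 𝒰} {f : Y ⟶ Z} {g : X ⟶ Y} {h : W ⟶ X} {B'' : 𝔞.Obj W}
    {B' : 𝔞.Obj X} {B : 𝔞.Obj Y} {A : 𝔞.Obj Z} (m : M f B A) (y : 𝔞.Hom g B' B)
    (y' : 𝔞.Hom h B'' B'),
    HEq (actR (actR m y) y') (actR m (𝔞.comp y y'))
  actL_actR : ∀ {W X Y Z : 𝒰} {f : Y ⟶ Z} {g : X ⟶ Y} {h : W ⟶ X} {B' : 𝔞.Obj W}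
    {B : 𝔞.Obj X} {A : 𝔞.Obj Y} {A' : 𝔞.Obj Z} (x : 𝔞.Hom f A A') (m : M g B A)
    (y : 𝔞.Hom h B' B),
    HEq (actL x (actR m y)) (actR (actL x m) y)

variable {k}

namespace Bimod

variable {𝔞 : GradedCat k 𝒰} (M : Bimod k 𝔞)

/-- Transport of bimodule elements along an equality of underlying morphisms of `𝒰`. -/
def cst {X Y : 𝒰} {f g : X ⟶ Y} (h : f = g) {B : 𝔞.Obj X} {A : 𝔞.Obj Y}
    (m : M.M f B A) : M.M g B A :=
  _root_.cast (by rw [h]) m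

theorem cst_heq {X Y : 𝒰} {f g : X ⟶ Y} (h : f = g) {B : 𝔞.Obj X} {A : 𝔞.Obj Y}
    (m : M.M f B A) : HEq (M.cst h m) m :=
  cast_heq _ _

theorem cst_add {X Y : 𝒰} {f g : X ⟶ Y} (h : f = g) {B : 𝔞.Obj X} {A : 𝔞.Obj Y}
    (m m' : M.M f B A) : M.cst h (m + m') = M.cst h m + M.cst h m' := by
  subst h; rfl

theorem cst_smul {X Y : 𝒰} {f g : X ⟶ Y} (h : f = g) {B : 𝔞.Obj X} {A : 𝔞.Obj Y}
    (r : k) (m : M.M f B A) : M.cst h (r • m) = r • M.cst h m := by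
  subst h; rfl

theorem actL_congr {X Y Z : 𝒰} {f f' : Y ⟶ Z} (hf : f = f') {g g' : X ⟶ Y}
    (hg : g = g') {B : 𝔞.Obj X} {A : 𝔞.Obj Y} {A' : 𝔞.Obj Z} {x : 𝔞.Hom f A A'}
    {x' : 𝔞.Hom f' A A'} (hx : HEq x x') {m : M.M g B A} {m' : M.M g' B A}
    (hm : HEq m m') : HEq (M.actL x m) (M.actL x' m') := by
  subst hf; subst hg; rw [eq_of_heq hx, eq_of_heq hm]

theorem actR_congr {X Y Z : 𝒰} {f f' : Y ⟶ Z} (hf : f = f') {g g' : X ⟶ Y}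
    (hg : g = g') {B' : 𝔞.Obj X} {B : 𝔞.Obj Y} {A : 𝔞.Obj Z} {m : M.M f B A}
    {m' : M.M f' B A} (hm : HEq m m') {y : 𝔞.Hom g B' B} {y' : 𝔞.Hom g' B' B}
    (hy : HEq y y') : HEq (M.actR m y) (M.actR m' y') := by
  subst hf; subst hg; rw [eq_of_heq hm, eq_of_heq hy]

end Bimod

/-- The identity bimodule `1_𝔞`. -/
def GradedCat.unit (𝔞 : GradedCat k 𝒰) : Bimod k 𝔞 where
  M := 𝔞.Hom
  actL := 𝔞.comp
  actR := 𝔞.comp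
  actL_add_left := 𝔞.comp_add_left
  actL_add_right := 𝔞.comp_add_right
  actL_smul_left := 𝔞.comp_smul_left
  actL_smul_right := 𝔞.comp_smul_right
  actR_add_left := 𝔞.comp_add_left
  actR_add_right := 𝔞.comp_add_right
  actR_smul_left := 𝔞.comp_smul_left
  actR_smul_right := 𝔞.comp_smul_right
  actL_id := 𝔞.id_comp
  actR_id := 𝔞.comp_id
  actL_actL x y m := (𝔞.assoc x y m).symm
  actR_actR m y y' := 𝔞.assoc m y y'
  actL_actR x m y := (𝔞.assoc x m y).symm

variable {𝒱 : Type u} [Category.{u} 𝒱]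

/-- The pullback `F*M` of an `𝔞`-bimodule along a graded functor
`(φ, F) : (𝒱, 𝔟) → (𝒰, 𝔞)`: `(F*M)_v(B, B') = M_{φ v}(F B, F B')`. -/
def Bimod.pullback {φ : 𝒱 ⥤ 𝒰} {𝔟 : GradedCat k 𝒱} {𝔞 : GradedCat k 𝒰}
    (F : GradedFunctor k φ 𝔟 𝔞) (M : Bimod k 𝔞) : Bimod k 𝔟 where
  M f B B' := M.M (φ.map f) (F.obj B) (F.obj B')
  actL := fun {X Y Z f g B A A'} x m =>
    M.cst (φ.map_comp g f).symm (M.actL (F.map f x) m)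
  actR := fun {X Y Z f g B' B A} m y =>
    M.cst (φ.map_comp g f).symm (M.actR m (F.map g y))
  actL_add_left := by
    intros; (try dsimp only); rw [F.map_add, M.actL_add_left, M.cst_add]
  actL_add_right := by
    intros; (try dsimp only); rw [M.actL_add_right, M.cst_add]
  actL_smul_left := by
    intros; (try dsimp only); rw [F.map_smul, M.actL_smul_left, M.cst_smul]
  actL_smul_right := by
    intros; (try dsimp only); rw [M.actL_smul_right, M.cst_smul]
  actR_add_left := by
    intros; (try dsimp only); rw [M.actR_add_left, M.cst_add]
  actR_add_right := by
    intros; (try dsimp only); rw [F.map_add, M.actR_add_right, M.cst_add]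
  actR_smul_left := by
    intros; (try dsimp only); rw [M.actR_smul_left, M.cst_smul]
  actR_smul_right := by
    intros; (try dsimp only); rw [F.map_smul, M.actR_smul_right, M.cst_smul]
  actL_id := by
    intro X Y g B A m; (try dsimp only)
    exact (M.cst_heq _ _).trans
      ((M.actL_congr (φ.map_id _) rfl (F.map_id _) HEq.rfl).trans (M.actL_id m))
  actR_id := by
    intro X Y f B A m; (try dsimp only)
    exact (M.cst_heq _ _).trans
      ((M.actR_congr rfl (φ.map_id _) HEq.rfl (F.map_id _)).trans (M.actR_id m))
  actL_actL := by
    intro W X Y Z f' f g B A A' A'' x y m; (try dsimp only)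
    refine ((M.cst_heq _ _).trans ?_).trans (M.cst_heq _ _).symm
    refine ((M.actL_congr rfl (φ.map_comp _ _) HEq.rfl (M.cst_heq _ _)).trans
      (M.actL_actL _ _ _)).trans ?_
    exact M.actL_congr (φ.map_comp _ _).symm rfl (F.map_comp _ _).symm HEq.rfl
  actR_actR := by
    intro W X Y Z f g h B'' B' B A m y y'; (try dsimp only)
    refine ((M.cst_heq _ _).trans ?_).trans (M.cst_heq _ _).symm
    refine ((M.actR_congr (φ.map_comp _ _) rfl (M.cst_heq _ _) HEq.rfl).trans
      (M.actR_actR _ _ _)).trans ?_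
    exact M.actR_congr rfl (φ.map_comp _ _).symm HEq.rfl (F.map_comp _ _).symm
  actL_actR := by
    intro W X Y Z f g h B' B A A' x m y; (try dsimp only)
    refine ((M.cst_heq _ _).trans ?_).trans (M.cst_heq _ _).symm
    refine ((M.actL_congr rfl (φ.map_comp _ _) HEq.rfl (M.cst_heq _ _)).trans
      (M.actL_actR _ _ _)).trans ?_
    exact M.actR_congr (φ.map_comp _ _).symm rfl (M.cst_heq _ _).symm HEq.rfl

/-- The functor `𝒱^♯ ⥤ 𝒰^♯` induced by a graded functor. -/
def sharpF {φ : 𝒱 ⥤ 𝒰} {𝔟 : GradedCat k 𝒱} {𝔞 : GradedCat k 𝒰}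
    (F : GradedFunctor k φ 𝔟 𝔞) : Sh 𝔟 ⥤ Sh 𝔞 where
  obj X := ⟨φ.obj X.1, F.obj X.2⟩
  map {X Y} f := φ.map (Sh.base f)
  map_id X := φ.map_id X.1
  map_comp f g := φ.map_comp _ _

/-- The map induced by a graded functor on families of elements over simplices. -/
def eltsMap {φ : 𝒱 ⥤ 𝒰} {𝔟 : GradedCat k 𝒱} {𝔞 : GradedCat k 𝒰}
    (F : GradedFunctor k φ 𝔟 𝔞) :
    ∀ {n : ℕ} {X Y : Sh 𝔟} {p : Pth (Sh 𝔟) n X Y},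
      PthElts 𝔟 p → PthElts 𝔞 (p.map (sharpF F))
  | _, _, _, _, .nil X => .nil _
  | _, _, _, _, .cons x e => .cons (F.map _ x) (eltsMap F e)

/-- The module of raw Hochschild `n`-cochains of `(𝒰, 𝔞)` with values in an
`𝔞`-bimodule `M`: families, indexed by the `n`-simplices `(u, A)` of `𝒩(𝔞)`, of maps
`𝔞_{u_{n-1}} ⊗ ⋯ ⊗ 𝔞_{u_0} → M_{|u|}(A₀, Aₙ)` (multilinearity is the separate
predicate `IsCochain`). -/
abbrev RawCochain {𝔞 : GradedCat k 𝒰} (M : Bimod k 𝔞) (n : ℕ) : Type u :=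
  ∀ (X Y : Sh 𝔞) (p : Pth (Sh 𝔞) n X Y), PthElts 𝔞 p → M.M (Sh.base p.comp) X.2 Y.2

/-- Restriction of Hochschild cochains along a graded functor, with values in the
pullback bimodule: `(F*ψ)_{(v,B)} = ψ_{(φ v, F B)} ∘ F^{⊗n}`. -/
def Fstar {φ : 𝒱 ⥤ 𝒰} {𝔟 : GradedCat k 𝒱} {𝔞 : GradedCat k 𝒰}
    (F : GradedFunctor k φ 𝔟 𝔞) (M : Bimod k 𝔞) {n : ℕ} (c : RawCochain M n) :
    RawCochain (Bimod.pullback F M) n :=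
  fun X Y p e =>
    M.cst (by rw [Pth.comp_map]; rfl) (c _ _ (p.map (sharpF F)) (eltsMap F e))

/-- Restriction of Hochschild cochains (with values in the identity bimodules) along a
subcartesian graded functor: `(F*ψ)_{(v,B)} = F⁻¹ ∘ ψ_{(φ v, F B)} ∘ F^{⊗n}`. -/
noncomputable def FstarUnit {φ : 𝒱 ⥤ 𝒰} {𝔟 : GradedCat k 𝒱} {𝔞 : GradedCat k 𝒰}
    (F : GradedFunctor k φ 𝔟 𝔞) (hF : F.Subcartesian) {n : ℕ}
    (c : RawCochain 𝔞.unit n) : RawCochain 𝔟.unit n :=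
  fun X Y p e =>
    (Equiv.ofBijective _ (hF (Sh.base p.comp) X.2 Y.2)).symm
      ((𝔞.unit).cst (by rw [Pth.comp_map]; rfl) (c _ _ (p.map (sharpF F)) (eltsMap F e)))

section Multilinear

variable {𝔞 : GradedCat k 𝒰} (M : Bimod k 𝔞)

/-- The multilinearity predicate for (relative) Hochschild cochains: additivity and
`k`-homogeneity in the first slot, and, recursively, multilinearity of all partial
evaluations. -/
def IsML : ∀ {n : ℕ} {W : 𝒰} {B : 𝔞.Obj W} {Y : Sh 𝔞} {v : W ⟶ Y.1},
    (∀ (Z : Sh 𝔞) (q : Pth (Sh 𝔞) n Y Z), PthElts 𝔞 q →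
      M.M (v ≫ Sh.base q.comp) B Z.2) → Prop
  | 0, _, _, _, _, _ => True
  | n + 1, W, B, Y, v, c =>
      (∀ (Y' Z : Sh 𝔞) (a : Y ⟶ Y') (q : Pth (Sh 𝔞) n Y' Z) (e : PthElts 𝔞 q)
        (x x' : 𝔞.Hom (Sh.base a) Y.2 Y'.2),
        c Z (.cons a q) (.cons (x + x') e) =
          c Z (.cons a q) (.cons x e) + c Z (.cons a q) (.cons x' e)) ∧
      (∀ (Y' Z : Sh 𝔞) (a : Y ⟶ Y') (q : Pth (Sh 𝔞) n Y' Z) (e : PthElts 𝔞 q) (r : k)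
        (x : 𝔞.Hom (Sh.base a) Y.2 Y'.2),
        c Z (.cons a q) (.cons (r • x) e) = r • c Z (.cons a q) (.cons x e)) ∧
      (∀ (Y' : Sh 𝔞) (a : Y ⟶ Y') (x : 𝔞.Hom (Sh.base a) Y.2 Y'.2),
        IsML (v := v ≫ Sh.base a)
          (fun Z q e => M.cst (by simp) (c Z (.cons a q) (.cons x e))))

/-- A raw cochain, viewed as a relative cochain. -/
def toRel {n : ℕ} (c : RawCochain M n) (X : Sh 𝔞) :
    ∀ (Z : Sh 𝔞) (q : Pth (Sh 𝔞) n X Z), PthElts 𝔞 q →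
      M.M (𝟙 X.1 ≫ Sh.base q.comp) X.2 Z.2 :=
  fun Z q e => M.cst (by simp) (c X Z q e)

/-- A raw cochain is a genuine Hochschild cochain if it is multilinear. -/
def IsCochain {n : ℕ} (c : RawCochain M n) : Prop :=
  ∀ X : Sh 𝔞, IsML M (toRel M c X)

end Multilinear

section Differential

variable {𝔞 : GradedCat k 𝒰}

/-- The inductive core of the Hochschild differential: `χ` is the relative cochain with
the already-consumed prefix applied, and `G` records the evaluation with the last
morphism of the prefix composed into the first remaining slot (initially, the right
action on the source). -/
def hochD (M : Bimod k 𝔞) {W : 𝒰} (B : 𝔞.Obj W) :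
    ∀ {m : ℕ} {Y Z : Sh 𝔞} (v : W ⟶ Y.1)
      (χ : ∀ (Z' : Sh 𝔞) (q : Pth (Sh 𝔞) m Y Z'), PthElts 𝔞 q →
        M.M (v ≫ Sh.base q.comp) B Z'.2)
      (G : ∀ (Y' Z' : Sh 𝔞) (c : Y ⟶ Y') (z : 𝔞.Hom (Sh.base c) Y.2 Y'.2)
        (q : Pth (Sh 𝔞) m Y' Z'), PthElts 𝔞 q →
        M.M (v ≫ (Sh.base c ≫ Sh.base q.comp)) B Z'.2)
      (p : Pth (Sh 𝔞) (m + 1) Y Z) (e : PthElts 𝔞 p),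
      M.M (v ≫ Sh.base p.comp) B Z.2
  | 0, Y, Z, v, χ, G, .cons a (.nil _), .cons x e' =>
      G _ _ a x (.nil _) e' - M.cst (by simp) (M.actL x (χ _ (.nil _) (.nil _)))
  | m + 1, Y, Z, v, χ, G, .cons a q, .cons x e' =>
      G _ _ a x q e' -
        M.cst (by simp)
          (hochD M B (v ≫ Sh.base a)
            (fun Z' r er => M.cst (by simp) (χ Z' (.cons a r) (.cons x er)))
            (fun Y'' Z' c z r er =>
              M.cst (by simp) (χ Z' (.cons (a ≫ c) r) (.cons (𝔞.comp z x) er)))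
            q e')

/-- The simplicial Hochschild differential on raw cochains. -/
def dRaw (M : Bimod k 𝔞) {n : ℕ} (c : RawCochain M n) : RawCochain M (n + 1) :=
  fun X Z p e =>
    M.cst (by simp)
      (hochD M X.2 (𝟙 X.1)
        (fun Z' q eq => M.cst (by simp) (c X Z' q eq))
        (fun Y' Z' a z q eq => M.cst (by simp) (M.actR (c Y' Z' q eq) z))
        p e)

end Differential

end MapGr

namespace MapGr

variable {k : Type u} [CommRing k]
variable {𝒰 : Type u} [Category.{u} 𝒰]

/-- A subcategory of `𝒰`: a class of objects and a class of morphisms, closed under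
identities and composition. -/
structure Subcat (𝒰 : Type u) [Category.{u} 𝒰] where
  objs : 𝒰 → Prop
  homs : ∀ {X Y : 𝒰}, (X ⟶ Y) → Prop
  dom_mem : ∀ {X Y : 𝒰} (f : X ⟶ Y), homs f → objs X
  cod_mem : ∀ {X Y : 𝒰} (f : X ⟶ Y), homs f → objs Y
  id_mem : ∀ X : 𝒰, objs X → homs (𝟙 X)
  comp_mem : ∀ {X Y Z : 𝒰} (f : X ⟶ Y) (g : Y ⟶ Z), homs f → homs g → homs (f ≫ g)

/-- The category carried by a subcategory. -/
def Subcat.Cat (𝒮 : Subcat 𝒰) : Type u := { X : 𝒰 // 𝒮.objs X }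

instance (𝒮 : Subcat 𝒰) : Category.{u} 𝒮.Cat where
  Hom A B := { f : A.1 ⟶ B.1 // 𝒮.homs f }
  id A := ⟨𝟙 A.1, 𝒮.id_mem A.1 A.2⟩
  comp f g := ⟨f.1 ≫ g.1, 𝒮.comp_mem _ _ f.2 g.2⟩
  id_comp f := by apply Subtype.ext; simp
  comp_id f := by apply Subtype.ext; simp
  assoc f g h := by apply Subtype.ext; simp

/-- The inclusion functor of a subcategory. -/
def Subcat.incl (𝒮 : Subcat 𝒰) : 𝒮.Cat ⥤ 𝒰 where
  obj A := A.1
  map f := f.1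
  map_id _ := rfl
  map_comp _ _ := rfl

/-- The intersection `𝒱₁ ∩ 𝒱₂` of two subcategories. -/
def Subcat.inter (𝒮 𝒯 : Subcat 𝒰) : Subcat 𝒰 where
  objs X := 𝒮.objs X ∧ 𝒯.objs X
  homs f := 𝒮.homs f ∧ 𝒯.homs f
  dom_mem f h := ⟨𝒮.dom_mem f h.1, 𝒯.dom_mem f h.2⟩
  cod_mem f h := ⟨𝒮.cod_mem f h.1, 𝒯.cod_mem f h.2⟩
  id_mem X h := ⟨𝒮.id_mem X h.1, 𝒯.id_mem X h.2⟩
  comp_mem f g h h' := ⟨𝒮.comp_mem f g h.1 h'.1, 𝒯.comp_mem f g h.2 h'.2⟩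

/-- The inclusion `𝒱₁ ∩ 𝒱₂ ⊆ 𝒱₁`. -/
def Subcat.interFst (𝒮 𝒯 : Subcat 𝒰) : (𝒮.inter 𝒯).Cat ⥤ 𝒮.Cat where
  obj A := ⟨A.1, A.2.1⟩
  map f := ⟨f.1, f.2.1⟩
  map_id _ := rfl
  map_comp _ _ := rfl

/-- The inclusion `𝒱₁ ∩ 𝒱₂ ⊆ 𝒱₂`. -/
def Subcat.interSnd (𝒮 𝒯 : Subcat 𝒰) : (𝒮.inter 𝒯).Cat ⥤ 𝒯.Cat where
  obj A := ⟨A.1, A.2.2⟩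
  map f := ⟨f.1, f.2.2⟩
  map_id _ := rfl
  map_comp _ _ := rfl

/-- The canonical (cartesian) graded functor
`(𝒱₁ ∩ 𝒱₂, 𝔞^φ) → (𝒱₁, 𝔞^{φ₁})` over the inclusion `𝒱₁ ∩ 𝒱₂ ⊆ 𝒱₁`. -/
def interRes₁ (𝒮 𝒯 : Subcat 𝒰) (𝔞 : GradedCat k 𝒰) :
    GradedFunctor k (Subcat.interFst 𝒮 𝒯) (𝔞.restrict (𝒮.inter 𝒯).incl)
      (𝔞.restrict 𝒮.incl) where
  obj {V} B := B
  map := fun {V V'} _f {B B'} x => x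
  map_add := by intros; rfl
  map_smul := by intros; rfl
  map_id := by
    intro V B
    exact (𝔞.Hcast_heq ((𝒮.inter 𝒯).incl.map_id V).symm (𝔞.id B)).trans
      (𝔞.Hcast_heq (𝒮.incl.map_id ((Subcat.interFst 𝒮 𝒯).obj V)).symm (𝔞.id B)).symm
  map_comp := by
    intro V V' V'' f g C B A x y
    exact (𝔞.Hcast_heq ((𝒮.inter 𝒯).incl.map_comp g f).symm (𝔞.comp x y)).trans
      (𝔞.Hcast_heq (𝒮.incl.map_comp ((Subcat.interFst 𝒮 𝒯).map g)
        ((Subcat.interFst 𝒮 𝒯).map f)).symm (𝔞.comp x y)).symm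

/-- The canonical (cartesian) graded functor
`(𝒱₁ ∩ 𝒱₂, 𝔞^φ) → (𝒱₂, 𝔞^{φ₂})` over the inclusion `𝒱₁ ∩ 𝒱₂ ⊆ 𝒱₂`. -/
def interRes₂ (𝒮 𝒯 : Subcat 𝒰) (𝔞 : GradedCat k 𝒰) :
    GradedFunctor k (Subcat.interSnd 𝒮 𝒯) (𝔞.restrict (𝒮.inter 𝒯).incl)
      (𝔞.restrict 𝒯.incl) where
  obj {V} B := B
  map := fun {V V'} _f {B B'} x => x
  map_add := by intros; rfl
  map_smul := by intros; rfl
  map_id := by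
    intro V B
    exact (𝔞.Hcast_heq ((𝒮.inter 𝒯).incl.map_id V).symm (𝔞.id B)).trans
      (𝔞.Hcast_heq (𝒯.incl.map_id ((Subcat.interSnd 𝒮 𝒯).obj V)).symm (𝔞.id B)).symm
  map_comp := by
    intro V V' V'' f g C B A x y
    exact (𝔞.Hcast_heq ((𝒮.inter 𝒯).incl.map_comp g f).symm (𝔞.comp x y)).trans
      (𝔞.Hcast_heq (𝒯.incl.map_comp ((Subcat.interSnd 𝒮 𝒯).map g)
        ((Subcat.interSnd 𝒮 𝒯).map f)).symm (𝔞.comp x y)).symm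

theorem interRes₁_subcartesian (𝒮 𝒯 : Subcat 𝒰) (𝔞 : GradedCat k 𝒰) :
    (interRes₁ 𝒮 𝒯 𝔞).Subcartesian := by
  intro V V' f B B'
  exact ⟨fun a b h => h, fun y => ⟨y, rfl⟩⟩

theorem interRes₂_subcartesian (𝒮 𝒯 : Subcat 𝒰) (𝔞 : GradedCat k 𝒰) :
    (interRes₂ 𝒮 𝒯 𝔞).Subcartesian := by
  intro V V' f B B'
  exact ⟨fun a b h => h, fun y => ⟨y, rfl⟩⟩

end MapGr

namespace MapGr

variable {k : Type u} [CommRing k]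

theorem MCcast_def {M₁ M₂ : ModuleCat.{u} k} (h : M₁ = M₂) : True := trivial

/-- Transport along an equality of modules. -/
def MCcast {M₁ M₂ : ModuleCat.{u} k} (h : M₁ = M₂) (x : M₁) : M₂ :=
  _root_.cast (congrArg (fun N : ModuleCat.{u} k => (N : Type u)) h) x

theorem MCcast_heq {M₁ M₂ : ModuleCat.{u} k} (h : M₁ = M₂) (x : M₁) :
    HEq (MCcast h x) x := cast_heq _ _

theorem MCcast_add {M₁ M₂ : ModuleCat.{u} k} (h : M₁ = M₂) (x y : M₁) :
    MCcast h (x + y) = MCcast h x + MCcast h y := by subst h; rfl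

theorem MCcast_smul {M₁ M₂ : ModuleCat.{u} k} (h : M₁ = M₂) (r : k) (x : M₁) :
    MCcast h (r • x) = r • MCcast h x := by subst h; rfl

theorem MCcast_zero {M₁ M₂ : ModuleCat.{u} k} (h : M₁ = M₂) :
    MCcast h (0 : M₁) = 0 := by subst h; rfl

theorem MCcast_eq_of_heq {M₁ M₂ : ModuleCat.{u} k} (h : M₁ = M₂) {x : M₁} {y : M₂}
    (hxy : HEq x y) : MCcast h x = y := by subst h; exact eq_of_heq hxy

theorem heq_of_conj {C : Type u} [Category.{u} C] {X X' Y Y' : C} (hX : X = X')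
    (hY : Y = Y') {f : X ⟶ Y} {g : X' ⟶ Y'}
    (h : f = eqToHom hX ≫ g ≫ eqToHom hY.symm) : HEq f g := by
  subst hX; subst hY; simpa using h

variable {𝒰 : Type u} [Category.{u} 𝒰]

theorem GradedCat.Hom_congr (𝔞 : GradedCat k 𝒰) {X X' Y Y' : 𝒰} (hX : X = X')
    (hY : Y = Y') {f : X ⟶ Y} {f' : X' ⟶ Y'} (hf : HEq f f') {B : 𝔞.Obj X}
    {B' : 𝔞.Obj X'} (hB : HEq B B') {A : 𝔞.Obj Y} {A' : 𝔞.Obj Y'} (hA : HEq A A') :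
    𝔞.Hom f B A = 𝔞.Hom f' B' A' := by
  subst hX; subst hY
  rw [eq_of_heq hf, eq_of_heq hB, eq_of_heq hA]

theorem GradedCat.comp_congr' (𝔞 : GradedCat k 𝒰) {X X' Y Y' Z Z' : 𝒰} (hX : X = X')
    (hY : Y = Y') (hZ : Z = Z') {f : Y ⟶ Z} {f' : Y' ⟶ Z'} (hf : HEq f f')
    {g : X ⟶ Y} {g' : X' ⟶ Y'} (hg : HEq g g') {C : 𝔞.Obj X} {C' : 𝔞.Obj X'}
    (hC : HEq C C') {B : 𝔞.Obj Y} {B' : 𝔞.Obj Y'} (hB : HEq B B') {A : 𝔞.Obj Z}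
    {A' : 𝔞.Obj Z'} (hA : HEq A A') {x : 𝔞.Hom f B A} {x' : 𝔞.Hom f' B' A'}
    (hx : HEq x x') {y : 𝔞.Hom g C B} {y' : 𝔞.Hom g' C' B'} (hy : HEq y y') :
    HEq (𝔞.comp x y) (𝔞.comp x' y') := by
  subst hX; subst hY; subst hZ
  obtain rfl := eq_of_heq hf
  obtain rfl := eq_of_heq hg
  obtain rfl := eq_of_heq hC
  obtain rfl := eq_of_heq hB
  obtain rfl := eq_of_heq hA
  rw [eq_of_heq hx, eq_of_heq hy]

theorem GradedCat.id_congr' (𝔞 : GradedCat k 𝒰) {X X' : 𝒰} (hX : X = X')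
    {A : 𝔞.Obj X} {A' : 𝔞.Obj X'} (hA : HEq A A') : HEq (𝔞.id A) (𝔞.id A') := by
  subst hX; rw [eq_of_heq hA]

theorem GradedFunctor.map_zero {𝒱 : Type u} [Category.{u} 𝒱] {φ : 𝒱 ⥤ 𝒰}
    {𝔟 : GradedCat k 𝒱} {𝔞 : GradedCat k 𝒰} (F : GradedFunctor k φ 𝔟 𝔞)
    {V V' : 𝒱} (f : V ⟶ V') (B : 𝔟.Obj V) (B' : 𝔟.Obj V') :
    F.map f (0 : 𝔟.Hom f B B') = 0 := by
  have h := F.map_add f (0 : 𝔟.Hom f B B') 0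
  rw [add_zero] at h
  exact (left_eq_add.mp h)

variable {𝒱₁ 𝒱₂ : Type u} [Category.{u} 𝒱₁] [Category.{u} 𝒱₂]

/-- Objects of the pullback `𝒱₁ ×_𝒰 𝒱₂` of two functors of small categories. -/
structure CatPB (φ₁ : 𝒱₁ ⥤ 𝒰) (φ₂ : 𝒱₂ ⥤ 𝒰) : Type u where
  left : 𝒱₁
  right : 𝒱₂
  eq : φ₁.obj left = φ₂.obj right

instance (φ₁ : 𝒱₁ ⥤ 𝒰) (φ₂ : 𝒱₂ ⥤ 𝒰) : Category.{u} (CatPB φ₁ φ₂) where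
  Hom A B := { fg : (A.left ⟶ B.left) × (A.right ⟶ B.right) //
    φ₁.map fg.1 = eqToHom A.eq ≫ φ₂.map fg.2 ≫ eqToHom B.eq.symm }
  id A := ⟨(𝟙 _, 𝟙 _), by simp⟩
  comp {A B C} f g := ⟨(f.1.1 ≫ g.1.1, f.1.2 ≫ g.1.2), by
    rw [Functor.map_comp, Functor.map_comp, f.2, g.2]; simp⟩
  id_comp f := by apply Subtype.ext; simp
  comp_id f := by apply Subtype.ext; simp
  assoc f g h := by apply Subtype.ext; simp

/-- The first projection of the pullback of categories. -/
def pbFstF (φ₁ : 𝒱₁ ⥤ 𝒰) (φ₂ : 𝒱₂ ⥤ 𝒰) : CatPB φ₁ φ₂ ⥤ 𝒱₁ where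
  obj A := A.left
  map f := f.1.1
  map_id _ := rfl
  map_comp _ _ := rfl

/-- The second projection of the pullback of categories. -/
def pbSndF (φ₁ : 𝒱₁ ⥤ 𝒰) (φ₂ : 𝒱₂ ⥤ 𝒰) : CatPB φ₁ φ₂ ⥤ 𝒱₂ where
  obj A := A.right
  map f := f.1.2
  map_id _ := rfl
  map_comp _ _ := rfl

section GradedPB

variable {φ₁ : 𝒱₁ ⥤ 𝒰} {φ₂ : 𝒱₂ ⥤ 𝒰} {𝔟₁ : GradedCat k 𝒱₁} {𝔟₂ : GradedCat k 𝒱₂}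
  {𝔞 : GradedCat k 𝒰}

theorem CatPB.homHeq {P Q : CatPB φ₁ φ₂} (f : P ⟶ Q) :
    HEq (φ₁.map f.1.1) (φ₂.map f.1.2) :=
  heq_of_conj P.eq Q.eq f.2

variable (F₁ : GradedFunctor k φ₁ 𝔟₁ 𝔞) (F₂ : GradedFunctor k φ₂ 𝔟₂ 𝔞)

/-- Objects of the pullback of map-graded categories: pairs of objects whose images in
`𝔞` agree. -/
def PBObj (P : CatPB φ₁ φ₂) : Type u :=
  { q : 𝔟₁.Obj P.left × 𝔟₂.Obj P.right // HEq (F₁.obj q.1) (F₂.obj q.2) }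

theorem pbHomEq {P Q : CatPB φ₁ φ₂} (f : P ⟶ Q) (bb : PBObj F₁ F₂ P)
    (bb' : PBObj F₁ F₂ Q) :
    𝔞.Hom (φ₁.map f.1.1) (F₁.obj bb.1.1) (F₁.obj bb'.1.1) =
      𝔞.Hom (φ₂.map f.1.2) (F₂.obj bb.1.2) (F₂.obj bb'.1.2) :=
  𝔞.Hom_congr P.eq Q.eq (CatPB.homHeq f) bb.2 bb'.2

/-- The fiber product of the graded `Hom`-modules. -/
def pbSub {P Q : CatPB φ₁ φ₂} (f : P ⟶ Q) (bb : PBObj F₁ F₂ P) (bb' : PBObj F₁ F₂ Q) :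
    Submodule k ((𝔟₁.Hom f.1.1 bb.1.1 bb'.1.1) × (𝔟₂.Hom f.1.2 bb.1.2 bb'.1.2)) where
  carrier := { xy | MCcast (pbHomEq F₁ F₂ f bb bb') (F₁.map f.1.1 xy.1) =
    F₂.map f.1.2 xy.2 }
  add_mem' := by
    intro a b ha hb
    simp only [Set.mem_setOf_eq] at *
    show MCcast _ (F₁.map f.1.1 (a.1 + b.1)) = F₂.map f.1.2 (a.2 + b.2)
    rw [F₁.map_add, F₂.map_add, MCcast_add, ha, hb]
  zero_mem' := by
    show MCcast _ (F₁.map f.1.1 0) = F₂.map f.1.2 0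
    rw [F₁.map_zero, F₂.map_zero, MCcast_zero]
  smul_mem' := by
    intro r a ha
    simp only [Set.mem_setOf_eq] at *
    show MCcast _ (F₁.map f.1.1 (r • a.1)) = F₂.map f.1.2 (r • a.2)
    rw [F₁.map_smul, F₂.map_smul, MCcast_smul, ha]

theorem pbcond_heq {P Q : CatPB φ₁ φ₂} {f : P ⟶ Q} {bb : PBObj F₁ F₂ P}
    {bb' : PBObj F₁ F₂ Q} (x : ↥(pbSub F₁ F₂ f bb bb')) :
    HEq (F₁.map f.1.1 x.1.1) (F₂.map f.1.2 x.1.2) :=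
  (MCcast_heq _ _).symm.trans (heq_of_eq x.2)

theorem pbheq {P Q : CatPB φ₁ φ₂} {f g : P ⟶ Q} (hfg : f = g) {bb : PBObj F₁ F₂ P}
    {bb' : PBObj F₁ F₂ Q} {x : ↥(pbSub F₁ F₂ f bb bb')} {y : ↥(pbSub F₁ F₂ g bb bb')}
    (h1 : HEq x.1.1 y.1.1) (h2 : HEq x.1.2 y.1.2) : HEq x y := by
  subst hfg
  exact heq_of_eq (Subtype.ext (Prod.ext (eq_of_heq h1) (eq_of_heq h2)))

/-- The pullback `(𝒱₁ ×_𝒰 𝒱₂, 𝔟₁ ×_𝔞 𝔟₂)` of two graded functors in `Map`. -/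
def GradedPB : GradedCat k (CatPB φ₁ φ₂) where
  Obj P := PBObj F₁ F₂ P
  Hom f bb bb' := ModuleCat.of k (pbSub F₁ F₂ f bb bb')
  comp := fun {P Q R f g C B A} x y =>
    ⟨(𝔟₁.comp x.1.1 y.1.1, 𝔟₂.comp x.1.2 y.1.2),
      MCcast_eq_of_heq _ ((F₁.map_comp x.1.1 y.1.1).trans
        ((𝔞.comp_congr' P.eq Q.eq R.eq (CatPB.homHeq f) (CatPB.homHeq g) C.2 B.2 A.2
          (pbcond_heq F₁ F₂ x) (pbcond_heq F₁ F₂ y)).trans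
          (F₂.map_comp x.1.2 y.1.2).symm))⟩
  id bb :=
    ⟨(𝔟₁.id bb.1.1, 𝔟₂.id bb.1.2),
      MCcast_eq_of_heq _ ((F₁.map_id bb.1.1).trans
        ((𝔞.id_congr' (CatPB.eq _) bb.2).trans (F₂.map_id bb.1.2).symm))⟩
  comp_add_left := by
    intro P Q R f g C B A x x' y
    refine Subtype.ext (Prod.ext ?_ ?_)
    · exact 𝔟₁.comp_add_left x.1.1 x'.1.1 y.1.1
    · exact 𝔟₂.comp_add_left x.1.2 x'.1.2 y.1.2
  comp_add_right := by
    intro P Q R f g C B A x y y'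
    refine Subtype.ext (Prod.ext ?_ ?_)
    · exact 𝔟₁.comp_add_right x.1.1 y.1.1 y'.1.1
    · exact 𝔟₂.comp_add_right x.1.2 y.1.2 y'.1.2
  comp_smul_left := by
    intro P Q R f g C B A r x y
    refine Subtype.ext (Prod.ext ?_ ?_)
    · exact 𝔟₁.comp_smul_left r x.1.1 y.1.1
    · exact 𝔟₂.comp_smul_left r x.1.2 y.1.2
  comp_smul_right := by
    intro P Q R f g C B A r x y
    refine Subtype.ext (Prod.ext ?_ ?_)
    · exact 𝔟₁.comp_smul_right r x.1.1 y.1.1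
    · exact 𝔟₂.comp_smul_right r x.1.2 y.1.2
  comp_id := by
    intro P Q f B A x
    exact pbheq F₁ F₂ (Category.id_comp f) (𝔟₁.comp_id x.1.1) (𝔟₂.comp_id x.1.2)
  id_comp := by
    intro P Q f B A x
    exact pbheq F₁ F₂ (Category.comp_id f) (𝔟₁.id_comp x.1.1) (𝔟₂.id_comp x.1.2)
  assoc := by
    intro P Q R S f g h D C B A x y z
    exact pbheq F₁ F₂ (Category.assoc h g f).symm
      (𝔟₁.assoc x.1.1 y.1.1 z.1.1) (𝔟₂.assoc x.1.2 y.1.2 z.1.2)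

/-- The first projection of the pullback in `Map`. -/
def pbProj₁ : GradedFunctor k (pbFstF φ₁ φ₂) (GradedPB F₁ F₂) 𝔟₁ where
  obj bb := bb.1.1
  map := fun {P Q} _f {bb bb'} x => x.1.1
  map_add := by intros; rfl
  map_smul := by intros; rfl
  map_id _ := HEq.rfl
  map_comp _ _ := HEq.rfl

/-- The second projection of the pullback in `Map`. -/
def pbProj₂ : GradedFunctor k (pbSndF φ₁ φ₂) (GradedPB F₁ F₂) 𝔟₂ where
  obj bb := bb.1.2
  map := fun {P Q} _f {bb bb'} x => x.1.2
  map_add := by intros; rfl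
  map_smul := by intros; rfl
  map_id _ := HEq.rfl
  map_comp _ _ := HEq.rfl

theorem pbProj₁_subcartesian (hF₂ : F₂.Subcartesian) : (pbProj₁ F₁ F₂).Subcartesian := by
  intro P Q f bb bb'
  constructor
  · intro x y hxy
    refine Subtype.ext (Prod.ext hxy ?_)
    apply (hF₂ f.1.2 bb.1.2 bb'.1.2).injective
    have hx := x.2
    have hy := y.2
    dsimp only
    rw [← hx, ← hy]
    exact congrArg (fun t => MCcast (pbHomEq F₁ F₂ f bb bb') (F₁.map f.1.1 t)) hxy
  · intro x₁
    obtain ⟨x₂, hx₂⟩ := (hF₂ f.1.2 bb.1.2 bb'.1.2).surjective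
      (MCcast (pbHomEq F₁ F₂ f bb bb') (F₁.map f.1.1 x₁))
    exact ⟨⟨(x₁, x₂), hx₂.symm⟩, rfl⟩

theorem pbProj₂_subcartesian (hF₁ : F₁.Subcartesian) : (pbProj₂ F₁ F₂).Subcartesian := by
  intro P Q f bb bb'
  constructor
  · intro x y hxy
    refine Subtype.ext (Prod.ext ?_ hxy)
    apply (hF₁ f.1.1 bb.1.1 bb'.1.1).injective
    have hx := x.2
    have hy := y.2
    have hx' : HEq (F₁.map f.1.1 x.1.1) (F₂.map f.1.2 x.1.2) := pbcond_heq F₁ F₂ x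
    have hy' : HEq (F₁.map f.1.1 y.1.1) (F₂.map f.1.2 y.1.2) := pbcond_heq F₁ F₂ y
    dsimp only
    have : F₂.map f.1.2 x.1.2 = F₂.map f.1.2 y.1.2 :=
      congrArg (fun t => F₂.map f.1.2 t) hxy
    exact eq_of_heq ((hx'.trans (heq_of_eq this)).trans hy'.symm)
  · intro x₂
    obtain ⟨x₁, hx₁⟩ := (hF₁ f.1.1 bb.1.1 bb'.1.1).surjective
      ((MCcast (pbHomEq F₁ F₂ f bb bb').symm (F₂.map f.1.2 x₂)))
    refine ⟨⟨(x₁, x₂), ?_⟩, rfl⟩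
    have hx₁' : F₁.map f.1.1 x₁ =
        MCcast (pbHomEq F₁ F₂ f bb bb').symm (F₂.map f.1.2 x₂) := hx₁
    show MCcast (pbHomEq F₁ F₂ f bb bb') (F₁.map f.1.1 x₁) = F₂.map f.1.2 x₂
    rw [hx₁']
    exact MCcast_eq_of_heq _ (MCcast_heq _ _)

end GradedPB

end MapGr

namespace MapGr

/-!
Restriction along a subcartesian functor `F` is read off on decorated simplices: `F` applied to
`(F^*c)(σ)` is `c(Fσ)`. Joint surjectivity on `n`-simplices and bijectivity of the `Fᵢ` on graded
morphisms let every decorated simplex of `𝔞` lift to some `𝔟ᵢ`, which gives uniqueness and,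
after checking on a lift, multilinearity of the glued cochain. The glued value is well defined
because two lifts with the same image assemble, edge by edge, into a decorated simplex of the
pullback `𝔟ᵢ ×_𝔞 𝔟ⱼ`, on which the compatibility hypothesis identifies the two values.
-/

section Simplices

variable {k : Type u} [CommRing k] {𝒰 : Type u} [Category.{u} 𝒰]

/-- An `n`-simplex `(u, A)` of `𝒩(𝔞)` decorated with graded morphisms over its edges: a pure
tensor in the source of the `(u, A)`-component of an `n`-cochain. -/
abbrev ElSimplex (𝔞 : GradedCat k 𝒰) (n : ℕ) : Type u :=
  Σ s : NerveTot (Sh 𝔞) n, PthElts 𝔞 s.2.2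

/-- Graded morphisms of `𝔞` over all arrows of `𝒰^♯`. Comparing values of cochains here turns
`HEq` between different `Hom`-modules into plain equality. -/
abbrev TotalHom (𝔞 : GradedCat k 𝒰) : Type u :=
  Σ a : Arrow (Sh 𝔞), 𝔞.Hom (Sh.base a.hom) a.left.2 a.right.2

theorem ElSimplex.mk_cons_inj {𝔞 : GradedCat k 𝒰} {n : ℕ} {X Y Z X' Y' Z' : Sh 𝔞}
    {f : X ⟶ Y} {p : Pth (Sh 𝔞) n Y Z} {x : 𝔞.Hom (Sh.base f) X.2 Y.2} {e : PthElts 𝔞 p}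
    {f' : X' ⟶ Y'} {p' : Pth (Sh 𝔞) n Y' Z'} {x' : 𝔞.Hom (Sh.base f') X'.2 Y'.2}
    {e' : PthElts 𝔞 p'}
    (h : (⟨⟨X, Z, .cons f p⟩, .cons x e⟩ : ElSimplex 𝔞 (n + 1)) =
      ⟨⟨X', Z', .cons f' p'⟩, .cons x' e'⟩) :
    (⟨⟨Y, Z, p⟩, e⟩ : ElSimplex 𝔞 n) = ⟨⟨Y', Z', p'⟩, e'⟩ ∧ X = X' ∧ HEq f f' ∧ HEq x x' := by
  cases h
  exact ⟨rfl, rfl, HEq.rfl, HEq.rfl⟩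

def ElSimplex.arrow {𝔞 : GradedCat k 𝒰} {n : ℕ} (σ : ElSimplex 𝔞 n) : Arrow (Sh 𝔞) :=
  Arrow.mk σ.1.2.2.comp

def RawCochain.eval {𝔞 : GradedCat k 𝒰} {n : ℕ} (c : RawCochain 𝔞.unit n)
    (σ : ElSimplex 𝔞 n) : TotalHom 𝔞 :=
  ⟨σ.arrow, c σ.1.1 σ.1.2.1 σ.1.2.2 σ.2⟩

theorem RawCochain.eval_injective {𝔞 : GradedCat k 𝒰} {n : ℕ} :
    Function.Injective (RawCochain.eval (𝔞 := 𝔞) (n := n)) := by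
  intro c c' h
  funext X Y p e
  exact eq_of_heq (Sigma.mk.inj_iff.mp (congrFun h ⟨⟨X, Y, p⟩, e⟩)).2

variable {𝒱 : Type u} [Category.{u} 𝒱] {φ : 𝒱 ⥤ 𝒰} {𝔟 : GradedCat k 𝒱} {𝔞 : GradedCat k 𝒰}

def ElSimplex.map (F : GradedFunctor k φ 𝔟 𝔞) {n : ℕ} (σ : ElSimplex 𝔟 n) : ElSimplex 𝔞 n :=
  ⟨σ.1.map (sharpF F), eltsMap F σ.2⟩

theorem ElSimplex.arrow_map (F : GradedFunctor k φ 𝔟 𝔞) {n : ℕ} (σ : ElSimplex 𝔟 n) :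
    (σ.map F).arrow = (sharpF F).mapArrow.obj σ.arrow := by
  simp [ElSimplex.arrow, ElSimplex.map, NerveTot.map, Pth.comp_map]

def GradedFunctor.totalMap (F : GradedFunctor k φ 𝔟 𝔞) (g : TotalHom 𝔟) : TotalHom 𝔞 :=
  ⟨(sharpF F).mapArrow.obj g.1, F.map (Sh.base g.1.hom) g.2⟩

end Simplices

section Subcartesian

variable {k : Type u} [CommRing k] {𝒰 : Type u} [Category.{u} 𝒰]
  {𝒱 : Type u} [Category.{u} 𝒱] {φ : 𝒱 ⥤ 𝒰} {𝔟 : GradedCat k 𝒱} {𝔞 : GradedCat k 𝒰}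
  {F : GradedFunctor k φ 𝔟 𝔞}

noncomputable def GradedFunctor.Subcartesian.homEquiv (hF : F.Subcartesian) {V V' : 𝒱}
    (f : V ⟶ V') (B : 𝔟.Obj V) (B' : 𝔟.Obj V') :
    𝔟.Hom f B B' ≃ₗ[k] 𝔞.Hom (φ.map f) (F.obj B) (F.obj B') :=
  LinearEquiv.ofBijective ⟨⟨F.map f, F.map_add f⟩, F.map_smul f⟩ (hF f B B')

noncomputable def eltsInv (hF : F.Subcartesian) :
    ∀ {m : ℕ} {X Y : Sh 𝔟} (q : Pth (Sh 𝔟) m X Y),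
      PthElts 𝔞 (q.map (sharpF F)) → PthElts 𝔟 q
  | _, X, _, .nil _ => fun _ => .nil X
  | _, _, _, .cons f p => fun
    | .cons x e => .cons ((hF.homEquiv (Sh.base f) _ _).symm x) (eltsInv hF p e)

theorem eltsMap_eltsInv (hF : F.Subcartesian) {m : ℕ} {X Y : Sh 𝔟} (q : Pth (Sh 𝔟) m X Y)
    (e : PthElts 𝔞 (q.map (sharpF F))) : eltsMap F (eltsInv hF q e) = e := by
  induction q with
  | nil X => cases e; rfl
  | cons f p ih =>
    cases e with
    | cons x e =>
      show PthElts.cons _ _ = _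
      rw [ih e]
      exact congrArg (PthElts.cons · e) ((hF.homEquiv (Sh.base f) _ _).apply_symm_apply x)

theorem totalMap_eval_FstarUnit (hF : F.Subcartesian) {n : ℕ} (c : RawCochain 𝔞.unit n)
    (σ : ElSimplex 𝔟 n) : F.totalMap ((FstarUnit F hF c).eval σ) = c.eval (σ.map F) :=
  Sigma.ext (σ.arrow_map F).symm <|
    (heq_of_eq ((Equiv.ofBijective _ (hF _ _ _)).apply_symm_apply _)).trans (Bimod.cst_heq _ _ _)

theorem FstarUnit_eq_iff (hF : F.Subcartesian) {n : ℕ} {c : RawCochain 𝔞.unit n}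
    {ψ : RawCochain 𝔟.unit n} :
    FstarUnit F hF c = ψ ↔ ∀ σ, F.totalMap (ψ.eval σ) = c.eval (σ.map F) := by
  refine ⟨fun h σ => h ▸ totalMap_eval_FstarUnit hF c σ, fun h => ?_⟩
  refine RawCochain.eval_injective (funext fun σ => Sigma.ext rfl (heq_of_eq ?_))
  have hσ := (totalMap_eval_FstarUnit hF c σ).trans (h σ).symm
  exact (hF _ _ _).injective (eq_of_heq (Sigma.mk.inj_iff.mp hσ).2)

theorem map_FstarUnit_eltsInv (hF : F.Subcartesian) {n : ℕ} (c : RawCochain 𝔞.unit n)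
    {X Y : Sh 𝔟} (t : Pth (Sh 𝔟) n X Y) (e : PthElts 𝔞 (t.map (sharpF F))) :
    F.map (Sh.base t.comp) (FstarUnit F hF c X Y t (eltsInv hF t e)) =
      (𝔞.unit).cst (by rw [Pth.comp_map]; rfl) (c _ _ (t.map (sharpF F)) e) := by
  unfold FstarUnit
  rw [eltsMap_eltsInv]
  exact (Equiv.ofBijective _ (hF _ _ _)).apply_symm_apply _

end Subcartesian

section Multilinear

variable {k : Type u} [CommRing k] {𝒰 : Type u} [Category.{u} 𝒰] {𝔞 : GradedCat k 𝒰}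

variable (𝔞) in
/-- `AddAt 𝔞 e₁ e₂ e₃`: the three families agree except in one slot, where the entry of `e₃` is
the sum of those of `e₁` and `e₂`. -/
inductive AddAt : ∀ {m : ℕ} {X Y : Sh 𝔞} {p : Pth (Sh 𝔞) m X Y},
    PthElts 𝔞 p → PthElts 𝔞 p → PthElts 𝔞 p → Prop
  | head {m : ℕ} {X Y Z : Sh 𝔞} {f : X ⟶ Y} {p : Pth (Sh 𝔞) m Y Z}
      (x x' : 𝔞.Hom (Sh.base f) X.2 Y.2) (e : PthElts 𝔞 p) :
      AddAt (.cons x e) (.cons x' e) (.cons (x + x') e)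
  | tail {m : ℕ} {X Y Z : Sh 𝔞} {f : X ⟶ Y} {p : Pth (Sh 𝔞) m Y Z}
      (x : 𝔞.Hom (Sh.base f) X.2 Y.2) {e₁ e₂ e₃ : PthElts 𝔞 p} :
      AddAt e₁ e₂ e₃ → AddAt (.cons x e₁) (.cons x e₂) (.cons x e₃)

variable (𝔞) in
inductive SmulAt (r : k) : ∀ {m : ℕ} {X Y : Sh 𝔞} {p : Pth (Sh 𝔞) m X Y},
    PthElts 𝔞 p → PthElts 𝔞 p → Prop
  | head {m : ℕ} {X Y Z : Sh 𝔞} {f : X ⟶ Y} {p : Pth (Sh 𝔞) m Y Z}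
      (x : 𝔞.Hom (Sh.base f) X.2 Y.2) (e : PthElts 𝔞 p) :
      SmulAt r (.cons x e) (.cons (r • x) e)
  | tail {m : ℕ} {X Y Z : Sh 𝔞} {f : X ⟶ Y} {p : Pth (Sh 𝔞) m Y Z}
      (x : 𝔞.Hom (Sh.base f) X.2 Y.2) {e e' : PthElts 𝔞 p} :
      SmulAt r e e' → SmulAt r (.cons x e) (.cons x e')

theorem Bimod.cst_eq_add_iff (M : Bimod k 𝔞) {X Y : 𝒰} {f g : X ⟶ Y} (h : f = g)
    {B : 𝔞.Obj X} {A : 𝔞.Obj Y} {m₁ m₂ m₃ : M.M f B A} :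
    M.cst h m₃ = M.cst h m₁ + M.cst h m₂ ↔ m₃ = m₁ + m₂ := by
  subst h; rfl

theorem Bimod.cst_eq_smul_iff (M : Bimod k 𝔞) {X Y : 𝒰} {f g : X ⟶ Y} (h : f = g)
    {B : 𝔞.Obj X} {A : 𝔞.Obj Y} (r : k) {m m' : M.M f B A} :
    M.cst h m' = r • M.cst h m ↔ m' = r • m := by
  subst h; rfl

theorem isML_iff (M : Bimod k 𝔞) {m : ℕ} {W : 𝒰} {B : 𝔞.Obj W} {Y : Sh 𝔞} {v : W ⟶ Y.1}
    (χ : ∀ (Z : Sh 𝔞) (q : Pth (Sh 𝔞) m Y Z), PthElts 𝔞 q →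
      M.M (v ≫ Sh.base q.comp) B Z.2) :
    IsML M χ ↔
      (∀ Z q (e₁ e₂ e₃ : PthElts 𝔞 q), AddAt 𝔞 e₁ e₂ e₃ → χ Z q e₃ = χ Z q e₁ + χ Z q e₂) ∧
      (∀ Z q r (e e' : PthElts 𝔞 q), SmulAt 𝔞 r e e' → χ Z q e' = r • χ Z q e) := by
  induction m generalizing W B Y v with
  | zero => exact ⟨fun _ => ⟨fun _ _ _ _ _ h => (nomatch h), fun _ _ _ _ _ h => (nomatch h)⟩,
      fun _ => trivial⟩
  | succ m ih =>
    simp only [IsML, ih]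
    constructor
    · rintro ⟨hadd, hsmul, htail⟩
      refine ⟨fun Z q e₁ e₂ e₃ h => ?_, fun Z q r e e' h => ?_⟩
      · cases h with
        | head x x' e => exact hadd _ _ _ _ _ x x'
        | tail x h => exact (M.cst_eq_add_iff _).mp ((htail _ _ x).1 _ _ _ _ _ h)
      · cases h with
        | head x e => exact hsmul _ _ _ _ _ r x
        | tail x h => exact (M.cst_eq_smul_iff _ r).mp ((htail _ _ x).2 _ _ _ _ _ h)
    · rintro ⟨hadd, hsmul⟩
      exact ⟨fun _ _ _ _ e x x' => hadd _ _ _ _ _ (.head x x' e),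
        fun _ _ _ _ e r x => hsmul _ _ _ _ _ (.head x e),
        fun _ _ x => ⟨fun _ _ _ _ _ h => (M.cst_eq_add_iff _).mpr (hadd _ _ _ _ _ (.tail x h)),
          fun _ _ r _ _ h => (M.cst_eq_smul_iff _ r).mpr (hsmul _ _ _ _ _ (.tail x h))⟩⟩

theorem isCochain_iff (M : Bimod k 𝔞) {n : ℕ} (c : RawCochain M n) :
    IsCochain M c ↔
      (∀ X Y p (e₁ e₂ e₃ : PthElts 𝔞 p), AddAt 𝔞 e₁ e₂ e₃ →
        c X Y p e₃ = c X Y p e₁ + c X Y p e₂) ∧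
      (∀ X Y p r (e e' : PthElts 𝔞 p), SmulAt 𝔞 r e e' → c X Y p e' = r • c X Y p e) := by
  simp only [IsCochain, isML_iff, toRel, Bimod.cst_eq_add_iff, Bimod.cst_eq_smul_iff,
    forall_and]

variable {𝒱 : Type u} [Category.{u} 𝒱] {φ : 𝒱 ⥤ 𝒰} {𝔟 : GradedCat k 𝒱}
  {F : GradedFunctor k φ 𝔟 𝔞}

theorem AddAt.eltsInv (hF : F.Subcartesian) {m : ℕ} {X Y : Sh 𝔟} {q : Pth (Sh 𝔟) m X Y}
    {e₁ e₂ e₃ : PthElts 𝔞 (q.map (sharpF F))} (h : AddAt 𝔞 e₁ e₂ e₃) :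
    AddAt 𝔟 (eltsInv hF q e₁) (eltsInv hF q e₂) (eltsInv hF q e₃) := by
  induction q with
  | nil X => cases h
  | cons f p ih =>
    cases h with
    | head x x' e =>
      show AddAt 𝔟 (.cons _ _) (.cons _ _) (.cons _ _)
      erw [LinearEquiv.map_add]
      exact .head _ _ _
    | tail x h => exact .tail _ (ih h)

theorem SmulAt.eltsInv (hF : F.Subcartesian) {m : ℕ} {X Y : Sh 𝔟} {q : Pth (Sh 𝔟) m X Y}
    {r : k} {e e' : PthElts 𝔞 (q.map (sharpF F))} (h : SmulAt 𝔞 r e e') :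
    SmulAt 𝔟 r (eltsInv hF q e) (eltsInv hF q e') := by
  induction q with
  | nil X => cases h
  | cons f p ih =>
    cases h with
    | head x e =>
      show SmulAt 𝔟 r (.cons _ _) (.cons _ _)
      erw [LinearEquiv.map_smul]
      exact .head _ _
    | tail x h => exact .tail _ (ih h)

end Multilinear

section Pullback

variable {k : Type u} [CommRing k] {𝒰 : Type u} [Category.{u} 𝒰] {𝔞 : GradedCat k 𝒰}
  {𝒱₁ 𝒱₂ : Type u} [Category.{u} 𝒱₁] [Category.{u} 𝒱₂] {φ₁ : 𝒱₁ ⥤ 𝒰} {φ₂ : 𝒱₂ ⥤ 𝒰}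
  {𝔟₁ : GradedCat k 𝒱₁} {𝔟₂ : GradedCat k 𝒱₂}
  (F₁ : GradedFunctor k φ₁ 𝔟₁ 𝔞) (F₂ : GradedFunctor k φ₂ 𝔟₂ 𝔞)

theorem conj_of_heq {C : Type u} [Category.{u} C] {X X' Y Y' : C} (hX : X = X')
    (hY : Y = Y') {f : X ⟶ Y} {g : X' ⟶ Y'} (h : HEq f g) :
    f = eqToHom hX ≫ g ≫ eqToHom hY.symm := by
  subst hX hY
  simpa using eq_of_heq h

def pairObj {X₁ : Sh 𝔟₁} {X₂ : Sh 𝔟₂} (h : (sharpF F₁).obj X₁ = (sharpF F₂).obj X₂) :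
    Sh (GradedPB F₁ F₂) :=
  ⟨⟨X₁.1, X₂.1, (Sigma.ext_iff.mp h).1⟩, ⟨(X₁.2, X₂.2), (Sigma.ext_iff.mp h).2⟩⟩

theorem ElSimplex.exists_pullback_lift {n : ℕ} (σ₁ : ElSimplex 𝔟₁ n) (σ₂ : ElSimplex 𝔟₂ n)
    (h : σ₁.map F₁ = σ₂.map F₂) :
    ∃ σ : ElSimplex (GradedPB F₁ F₂) n,
      σ.map (pbProj₁ F₁ F₂) = σ₁ ∧ σ.map (pbProj₂ F₁ F₂) = σ₂ := by
  obtain ⟨⟨X₁, Y₁, p₁⟩, (e₁ : PthElts 𝔟₁ p₁)⟩ := σ₁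
  obtain ⟨⟨X₂, Y₂, p₂⟩, (e₂ : PthElts 𝔟₂ p₂)⟩ := σ₂
  induction e₁ generalizing X₂ Y₂ with
  | nil X₁ =>
    cases e₂ with
    | nil X₂ =>
      have hX : (sharpF F₁).obj X₁ = (sharpF F₂).obj X₂ := congrArg (fun σ => σ.1.1) h
      exact ⟨⟨⟨pairObj F₁ F₂ hX, _, .nil _⟩, .nil _⟩, rfl, rfl⟩
  | cons x₁ e₁ ih =>
    cases e₂ with
    | cons x₂ e₂ =>
      obtain ⟨htail, hX, hf, hx⟩ := ElSimplex.mk_cons_inj h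
      obtain ⟨⟨⟨W, V, q⟩, d⟩, h₁, h₂⟩ := ih _ _ _ e₂ htail
      cases h₁
      cases h₂
      exact ⟨⟨⟨pairObj F₁ F₂ hX, V, .cons ⟨(_, _), conj_of_heq _ W.1.eq hf⟩ q⟩,
        .cons ⟨(x₁, x₂), MCcast_eq_of_heq _ hx⟩ d⟩, rfl, rfl⟩

theorem totalMap_pbProj_comm (g : TotalHom (GradedPB F₁ F₂)) :
    F₁.totalMap ((pbProj₁ F₁ F₂).totalMap g) = F₂.totalMap ((pbProj₂ F₁ F₂).totalMap g) := by
  obtain ⟨⟨⟨P, b⟩, ⟨Q, b'⟩, f⟩, x⟩ := g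
  have hP : (⟨φ₁.obj P.left, F₁.obj b.1.1⟩ : Sh 𝔞) = ⟨φ₂.obj P.right, F₂.obj b.1.2⟩ :=
    Sigma.ext P.eq b.2
  have hQ : (⟨φ₁.obj Q.left, F₁.obj b'.1.1⟩ : Sh 𝔞) = ⟨φ₂.obj Q.right, F₂.obj b'.1.2⟩ :=
    Sigma.ext Q.eq b'.2
  exact Sigma.ext ((Arrow.mk_eq_mk_iff _ _).mpr
    ⟨hP, hQ, conj_of_heq (C := Sh 𝔞) hP hQ (CatPB.homHeq f)⟩)
    (pbcond_heq F₁ F₂ x)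

variable {F₁ F₂} in
theorem totalMap_eval_eq_of_compatible (hF₁ : F₁.Subcartesian) (hF₂ : F₂.Subcartesian)
    {n : ℕ} {ψ₁ : RawCochain 𝔟₁.unit n} {ψ₂ : RawCochain 𝔟₂.unit n}
    (hcompat : FstarUnit (pbProj₁ F₁ F₂) (pbProj₁_subcartesian F₁ F₂ hF₂) ψ₁ =
      FstarUnit (pbProj₂ F₁ F₂) (pbProj₂_subcartesian F₁ F₂ hF₁) ψ₂)
    {σ₁ : ElSimplex 𝔟₁ n} {σ₂ : ElSimplex 𝔟₂ n} (h : σ₁.map F₁ = σ₂.map F₂) :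
    F₁.totalMap (ψ₁.eval σ₁) = F₂.totalMap (ψ₂.eval σ₂) := by
  obtain ⟨σ, rfl, rfl⟩ := ElSimplex.exists_pullback_lift F₁ F₂ σ₁ σ₂ h
  rw [← totalMap_eval_FstarUnit (pbProj₁_subcartesian F₁ F₂ hF₂),
    ← totalMap_eval_FstarUnit (pbProj₂_subcartesian F₁ F₂ hF₁), totalMap_pbProj_comm, hcompat]

end Pullback

section Cover

variable {k : Type u} [CommRing k] {𝒰 : Type u} [Category.{u} 𝒰] {𝔞 : GradedCat k 𝒰}
  {ι : Type u} {𝒱 : ι → Type u} [∀ i, Category.{u} (𝒱 i)] {φ : ∀ i, 𝒱 i ⥤ 𝒰}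
  {𝔟 : ∀ i, GradedCat k (𝒱 i)} {F : ∀ i, GradedFunctor k (φ i) (𝔟 i) 𝔞}

variable (F) in
def CoversSimplices (n : ℕ) : Prop :=
  ∀ s : NerveTot (Sh 𝔞) n, ∃ i, ∃ t : NerveTot (Sh (𝔟 i)) n, NerveTot.map (sharpF (F i)) t = s

theorem CoversSimplices.exists_map_eq (hF : ∀ i, (F i).Subcartesian) {n : ℕ}
    (hcov : CoversSimplices F n) (σ : ElSimplex 𝔞 n) :
    ∃ i, ∃ σ' : ElSimplex (𝔟 i) n, σ'.map (F i) = σ := by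
  obtain ⟨s, e⟩ := σ
  obtain ⟨i, t, rfl⟩ := hcov s
  exact ⟨i, ⟨t, eltsInv (hF i) t.2.2 e⟩, congrArg (Sigma.mk _) (eltsMap_eltsInv _ _ e)⟩

theorem CoversSimplices.isCochain_of_isCochain_FstarUnit (hF : ∀ i, (F i).Subcartesian)
    {n : ℕ} (hcov : CoversSimplices F n) {c : RawCochain 𝔞.unit n}
    (hc : ∀ i, IsCochain (𝔟 i).unit (FstarUnit (F i) (hF i) c)) : IsCochain 𝔞.unit c := by
  refine (isCochain_iff _ c).mpr ⟨fun X Y p e₁ e₂ e₃ h => ?_, fun X Y p r e e' h => ?_⟩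
  · obtain ⟨i, ⟨X', Y', t⟩, ht⟩ := hcov ⟨X, Y, p⟩
    dsimp only [NerveTot.map] at ht
    cases ht
    have hadd := (congrArg ((F i).map (Sh.base t.comp))
      (((isCochain_iff _ _).mp (hc i)).1 X' Y' t _ _ _ (h.eltsInv (hF i)))).trans
      ((F i).map_add _ _ _)
    rw [map_FstarUnit_eltsInv, map_FstarUnit_eltsInv, map_FstarUnit_eltsInv] at hadd
    exact (Bimod.cst_eq_add_iff _ _).mp hadd
  · obtain ⟨i, ⟨X', Y', t⟩, ht⟩ := hcov ⟨X, Y, p⟩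
    dsimp only [NerveTot.map] at ht
    cases ht
    have hsmul := (congrArg ((F i).map (Sh.base t.comp))
      (((isCochain_iff _ _).mp (hc i)).2 X' Y' t r _ _ (h.eltsInv (hF i)))).trans
      ((F i).map_smul _ _ _)
    rw [map_FstarUnit_eltsInv, map_FstarUnit_eltsInv] at hsmul
    exact (Bimod.cst_eq_smul_iff _ _ r).mp hsmul

theorem CoversSimplices.eq_of_FstarUnit_eq (hF : ∀ i, (F i).Subcartesian) {n : ℕ}
    (hcov : CoversSimplices F n) {c c' : RawCochain 𝔞.unit n}
    (h : ∀ i, FstarUnit (F i) (hF i) c = FstarUnit (F i) (hF i) c') : c = c' := by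
  refine RawCochain.eval_injective (funext fun σ => ?_)
  obtain ⟨i, σ', rfl⟩ := hcov.exists_map_eq hF σ
  rw [← totalMap_eval_FstarUnit (hF i), h i, totalMap_eval_FstarUnit]

theorem CoversSimplices.exists_glue (hF : ∀ i, (F i).Subcartesian) {n : ℕ}
    (hcov : CoversSimplices F n) (ψ : ∀ i, RawCochain (𝔟 i).unit n)
    (hcompat : ∀ i j,
      FstarUnit (pbProj₁ (F i) (F j)) (pbProj₁_subcartesian (F i) (F j) (hF j)) (ψ i) =
      FstarUnit (pbProj₂ (F i) (F j)) (pbProj₂_subcartesian (F i) (F j) (hF i)) (ψ j)) :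
    ∃ c : RawCochain 𝔞.unit n, ∀ i, FstarUnit (F i) (hF i) c = ψ i := by
  have hglue : ∀ σ : ElSimplex 𝔞 n, ∃ x : 𝔞.Hom (Sh.base σ.arrow.hom) σ.arrow.left.2
      σ.arrow.right.2, ∀ i (σ' : ElSimplex (𝔟 i) n),
        σ'.map (F i) = σ → (F i).totalMap ((ψ i).eval σ') = ⟨σ.arrow, x⟩ := by
    intro σ
    obtain ⟨i, σ₀, rfl⟩ := hcov.exists_map_eq hF σ
    obtain ⟨x, hx⟩ : ∃ x, (F i).totalMap ((ψ i).eval σ₀) = ⟨(σ₀.map (F i)).arrow, x⟩ := by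
      rw [ElSimplex.arrow_map]
      exact ⟨_, rfl⟩
    exact ⟨x, fun j σ' h =>
      (totalMap_eval_eq_of_compatible (hF j) (hF i) (hcompat j i) h).trans hx⟩
  choose c hc using hglue
  exact ⟨fun X Y p e => c ⟨⟨X, Y, p⟩, e⟩,
    fun i => (FstarUnit_eq_iff (hF i)).mpr fun σ' => hc _ i σ' rfl⟩

end Cover

/-- Fix `n ∈ ℕ`.  Let `((φᵢ, Fᵢ) : (𝒱ᵢ, 𝔟ᵢ) → (𝒰, 𝔞))` be an `n`-cover of map-graded
categories consisting of subcartesian graded functors, and let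
`(𝒱ᵢ ×_𝒰 𝒱ⱼ, 𝔟ᵢ ×_𝔞 𝔟ⱼ)` denote the pullbacks in `Map`, with (subcartesian)
projections `G₁`, `G₂`.  Then `Cⁿ` satisfies the sheaf condition: every family of
Hochschild `n`-cochains `ψᵢ ∈ Cⁿ_{𝒱ᵢ}(𝔟ᵢ)` with `G₁*(ψᵢ) = G₂*(ψⱼ)` for all `i, j`
glues to a unique `ψ ∈ Cⁿ_𝒰(𝔞)` with `Fᵢ*(ψ) = ψᵢ` for all `i`.  Hence the presheaf
`Cⁿ : Map_sc → Mod(k)` is a sheaf for the pretopology of `n`-covers. -/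
theorem statement14 {k : Type u} [CommRing k] {𝒰 : Type u} [Category.{u} 𝒰]
    (𝔞 : GradedCat k 𝒰) {ι : Type u} (𝒱 : ι → Type u) [∀ i, Category.{u} (𝒱 i)]
    (φ : ∀ i, 𝒱 i ⥤ 𝒰) (𝔟 : ∀ i, GradedCat k (𝒱 i))
    (F : ∀ i, GradedFunctor k (φ i) (𝔟 i) 𝔞) (hF : ∀ i, (F i).Subcartesian) (n : ℕ)
    (hcov : ∀ m ≤ n, ∀ s : NerveTot (Sh 𝔞) m, ∃ i, ∃ t : NerveTot (Sh (𝔟 i)) m,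
      NerveTot.map (sharpF (F i)) t = s)
    (ψ : ∀ i, RawCochain (𝔟 i).unit n) (hψ : ∀ i, IsCochain (𝔟 i).unit (ψ i))
    (hcompat : ∀ i j,
      FstarUnit (pbProj₁ (F i) (F j)) (pbProj₁_subcartesian (F i) (F j) (hF j)) (ψ i) =
      FstarUnit (pbProj₂ (F i) (F j)) (pbProj₂_subcartesian (F i) (F j) (hF i)) (ψ j)) :
    ∃! c : RawCochain 𝔞.unit n, IsCochain 𝔞.unit c ∧
      ∀ i, FstarUnit (F i) (hF i) c = ψ i := by
  have hcovn : CoversSimplices F n := hcov n le_rfl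
  obtain ⟨c, hc⟩ := hcovn.exists_glue hF ψ hcompat
  refine ⟨c, ⟨hcovn.isCochain_of_isCochain_FstarUnit hF fun i => hc i ▸ hψ i, hc⟩, ?_⟩
  rintro c' ⟨-, hc'⟩
  exact hcovn.eq_of_FstarUnit_eq hF fun i => (hc' i).trans (hc i).symm

end MapGr
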